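/- Let $d_n = (2! \cdot 3! \cdots n!)^4 \cdot (n+1)!$. Then for all integers $p, q \geq 2$, the number $d_p \cdot d_q$ divides $96 \cdot d_{p+q-2}$. -/
import Mathlib


/-- `d n = (2! ⋯ n!)^4 * (n+1)!` -/
def d (n : ℕ) : ℕ := (∏ k ∈ Finset.Icc 2 n, Nat.factorial k) ^ 4 * Nat.factorial (n + 1)

lemma d_succ (n : ℕ) (hn : 1 ≤ n) :
    d (n + 1) = d n * Nat.factorial (n + 1) ^ 3 * Nat.factorial (n + 2) := by
  unfold d
  rw [Finset.prod_Icc_succ_top (by omega : 2 ≤ n + 1)]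
  ring

theorem d_mul_d_dvd_96_mul (p q : ℕ) (hp : 2 ≤ p) (hq : 2 ≤ q) :
    d p * d q ∣ 96 * d (p + q - 2) := by
  induction q, hq using Nat.le_induction with
  | base =>
    have h2 : d 2 = 96 := by decide
    have : p + 2 - 2 = p := by omega
    rw [this, h2, mul_comm]
  | succ q hq ih =>
    set m := p + q - 2 with hm
    have hpq : p + q = m + 2 := by omega
    have hidx : p + (q + 1) - 2 = m + 1 := by omega
    rw [hidx, d_succ m (by omega), d_succ q (by omega)]
    have hA : Nat.factorial (q + 1) ^ 3 * Nat.factorial (q + 2) ∣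
        Nat.factorial (m + 1) ^ 3 * Nat.factorial (m + 2) :=
      mul_dvd_mul (pow_dvd_pow_of_dvd (Nat.factorial_dvd_factorial (by omega)) 3)
        (Nat.factorial_dvd_factorial (by omega))
    have := mul_dvd_mul ih hA
    calc d p * (d q * Nat.factorial (q + 1) ^ 3 * Nat.factorial (q + 2))
        = d p * d q * (Nat.factorial (q + 1) ^ 3 * Nat.factorial (q + 2)) := by ring
      _ ∣ 96 * d m * (Nat.factorial (m + 1) ^ 3 * Nat.factorial (m + 2)) := this
      _ = 96 * (d m * Nat.factorial (m + 1) ^ 3 * Nat.factorial (m + 2)) := by ring
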